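/- arXiv:quant-ph/0404071 — 5 statements merged into one kernel-verified Lean document; each statement's English description precedes it below -/
import Mathlib

section
/- Let (Σ, L, ξ) be a state property system with Cartan map κ. Then κ(0) = ∅, κ(I) = Σ, and for every family (a_i)_{i∈J} in L one has κ(⋀_i a_i) = ⋂_i κ(a_i). Consequently the image κ(L) = {κ(a) | a ∈ L} is a collection of subsets of Σ containing ∅ and Σ and closed under arbitrary intersections of nonempty subfamilies, i.e. (Σ, κ(L)) is a closure space. -/
/-- The Cartan map of a state property system: `κ a = {p | a ∈ ξ p}`. -/
def cartan {S L : Type*} (ξ : S → Set L) (a : L) : Set S := {p | a ∈ ξ p}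

/-- `(S, L, ξ)` is a state property system. -/
structure IsSPS {S L : Type*} [CompleteLattice L] (ξ : S → Set L) : Prop where
  bot_not_mem : ∀ p, (⊥ : L) ∉ ξ p
  sInf_mem : ∀ p (A : Set L), (∀ a ∈ A, a ∈ ξ p) → sInf A ∈ ξ p
  le_iff : ∀ a b : L, a ≤ b ↔ ∀ r, a ∈ ξ r → b ∈ ξ r
/-- `F` is the family of closed sets of a closure space on `X`. -/
def IsClosureSpace {X : Type*} (F : Set (Set X)) : Prop :=
  ∅ ∈ F ∧ Set.univ ∈ F ∧ ∀ G ⊆ F, G.Nonempty → ⋂₀ G ∈ F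

/-!
Axiom (iii) makes each `ξ p` upward closed, so with (ii) we get `⋀ A ∈ ξ p ↔ A ⊆ ξ p`, i.e.
`κ (⋀ A) = ⋂_{a ∈ A} κ a`. Taking `A = ∅` gives `κ ⊤ = Σ`, and an arbitrary family of sets in
`κ(L)` is the image under `κ` of its preimage, so its intersection is `κ` of a meet.
-/

namespace IsSPS

variable {S L : Type*} [CompleteLattice L] {ξ : S → Set L}

theorem mem_of_le (hξ : IsSPS ξ) {a b : L} (hab : a ≤ b) {p : S} (ha : a ∈ ξ p) : b ∈ ξ p :=
  (hξ.le_iff a b).mp hab p ha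

theorem sInf_mem_iff (hξ : IsSPS ξ) (p : S) (A : Set L) : sInf A ∈ ξ p ↔ ∀ a ∈ A, a ∈ ξ p :=
  ⟨fun h _ ha => hξ.mem_of_le (sInf_le ha) h, hξ.sInf_mem p A⟩

theorem cartan_bot (hξ : IsSPS ξ) : cartan ξ (⊥ : L) = ∅ :=
  Set.eq_empty_of_forall_notMem hξ.bot_not_mem

theorem cartan_sInf (hξ : IsSPS ξ) (A : Set L) : cartan ξ (sInf A) = ⋂ a ∈ A, cartan ξ a := by
  ext p
  simpa [cartan] using hξ.sInf_mem_iff p A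

theorem cartan_top (hξ : IsSPS ξ) : cartan ξ (⊤ : L) = Set.univ := by
  simpa using hξ.cartan_sInf ∅

theorem cartan_iInf (hξ : IsSPS ξ) {ι : Sort*} (a : ι → L) :
    cartan ξ (⨅ i, a i) = ⋂ i, cartan ξ (a i) := by
  simp [iInf, hξ.cartan_sInf]

theorem sInter_mem_range_cartan (hξ : IsSPS ξ) {G : Set (Set S)} (hG : G ⊆ Set.range (cartan ξ)) :
    ⋂₀ G ∈ Set.range (cartan ξ) := by
  refine ⟨sInf (cartan ξ ⁻¹' G), ?_⟩
  rw [hξ.cartan_sInf, ← Set.sInter_image, Set.image_preimage_eq_of_subset hG]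

theorem isClosureSpace_range_cartan (hξ : IsSPS ξ) : IsClosureSpace (Set.range (cartan ξ)) :=
  ⟨⟨⊥, hξ.cartan_bot⟩, ⟨⊤, hξ.cartan_top⟩, fun _ hG _ => hξ.sInter_mem_range_cartan hG⟩

end IsSPS

/-- the Cartan map sends `0` to `∅`, `I` to `Σ`, arbitrary infima to
intersections, and its image is a closure structure on `Σ`. -/
theorem stmt0 {S L : Type*} [CompleteLattice L] (ξ : S → Set L) (hξ : IsSPS ξ) :
    cartan ξ (⊥ : L) = ∅ ∧ cartan ξ (⊤ : L) = Set.univ ∧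
    (∀ {ι : Type*} (a : ι → L), cartan ξ (⨅ i, a i) = ⋂ i, cartan ξ (a i)) ∧
    IsClosureSpace (Set.range (cartan ξ)) :=
  ⟨hξ.cartan_bot, hξ.cartan_top, hξ.cartan_iInf, hξ.isClosureSpace_range_cartan⟩
end

section
/- Let (X, F) be a closure space and define ξ̄ : X → P(F) by ξ̄(p) = {F ∈ F | p ∈ F}. Then, with F ordered by inclusion (so that F is a complete lattice in which the infimum of a nonempty family is its intersection, the bottom element is ∅ and the top element is X), the triple (X, F, ξ̄) is a state property system: (i) ∅ ∉ ξ̄(p) for all p; (ii) if F_i ∈ ξ̄(p) for all i in a family then the infimum of the F_i in F belongs to ξ̄(p); (iii) for F, G ∈ F, F ⊆ G if and only if every p ∈ X with F ∈ ξ̄(p) satisfies G ∈ ξ̄(p). -/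
/-- for a closure space `(X, F)`, the map `ξ̄ p = {F ∈ F | p ∈ F}` makes
`(X, F, ξ̄)` a state property system (with `F` ordered by inclusion, where the infimum of
a nonempty family is its intersection, the bottom is `∅` and the top is `X`). -/
theorem stmt2 {X : Type*} (F : Set (Set X)) (hF : IsClosureSpace F) :
    let ξb : X → Set (Set X) := fun p => {f | f ∈ F ∧ p ∈ f}
    -- (i) the bottom element `∅` of `F` belongs to no `ξ̄ p`
    (∀ p, (∅ : Set X) ∉ ξb p) ∧
    -- (ii) infima (in `F`) of families inside `ξ̄ p` stay in `ξ̄ p`: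
    -- the empty family has infimum the top element `X`, a nonempty family has
    -- infimum its intersection
    (∀ p, (Set.univ : Set X) ∈ ξb p) ∧
    (∀ p, ∀ G ⊆ ξb p, G.Nonempty → ⋂₀ G ∈ ξb p) ∧
    -- (iii) the order of `F` is determined by `ξ̄`
    (∀ f ∈ F, ∀ g ∈ F, f ⊆ g ↔ ∀ p, f ∈ ξb p → g ∈ ξb p) := by
  obtain ⟨-, huniv, hsInter⟩ := hF
  refine ⟨fun p hp => hp.2, fun p => ⟨huniv, trivial⟩, ?_, ?_⟩
  · intro p G hG hne
    exact ⟨hsInter G (fun g hg => (hG hg).1) hne, fun g hg => (hG hg).2⟩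
  · intro f hf g hg
    exact ⟨fun hfg p hp => ⟨hg, hfg hp.2⟩, fun h p hp => (h p ⟨hf, hp⟩).2⟩
end

section
/- Let (Σ, L, ξ) be a state property system with Cartan map κ, let (Σ, κ(L)) be its associated closure space and let ξ̄ : Σ → P(κ(L)) be given by ξ̄(p) = {F ∈ κ(L) | p ∈ F}. Then the pair (id_Σ, κ) is an isomorphism of state property systems from (Σ, L, ξ) to (Σ, κ(L), ξ̄): κ : L → κ(L) is an order-preserving bijection whose inverse is order-preserving, and for all a ∈ L and p ∈ Σ one has a ∈ ξ(p) if and only if κ(a) ∈ ξ̄(p). -/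
/-! Axiom (iii) of a state property system says precisely that `a ≤ b ↔ κ a ⊆ κ b`, so the
Cartan map is an order embedding and hence an order isomorphism onto its image; the
compatibility of `ξ` with `ξ̄` is then a matter of unfolding definitions. -/

namespace IsSPS

variable {S L : Type*} [CompleteLattice L] {ξ : S → Set L}

theorem cartan_subset_cartan_iff (hξ : IsSPS ξ) (a b : L) :
    cartan ξ a ⊆ cartan ξ b ↔ a ≤ b :=
  (hξ.le_iff a b).symm

def cartanEmbedding (hξ : IsSPS ξ) : L ↪o Set S :=
  OrderEmbedding.ofMapLEIff (cartan ξ) hξ.cartan_subset_cartan_iff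

end IsSPS

/-- `(id, κ)` is an isomorphism of state property systems from
`(Σ, L, ξ)` to `(Σ, κ(L), ξ̄)`: `κ : L → κ(L)` is an order-preserving bijection with
order-preserving inverse, and `a ∈ ξ(p) ↔ κ(a) ∈ ξ̄(p)`. -/
theorem stmt4 {S L : Type*} [CompleteLattice L] (ξ : S → Set L) (hξ : IsSPS ξ) :
    let ξb : S → Set (Set S) := fun p => {f | f ∈ Set.range (cartan ξ) ∧ p ∈ f}
    (∃ e : L ≃o Set.range (cartan ξ), ∀ a : L, (e a : Set S) = cartan ξ a) ∧
    (∀ (a : L) (p : S), a ∈ ξ p ↔ cartan ξ a ∈ ξb p) :=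
  ⟨⟨hξ.cartanEmbedding.orderIso, fun _ => rfl⟩,
    fun a _ => ⟨fun h => ⟨Set.mem_range_self a, h⟩, And.right⟩⟩
end

section
/- Let (X, F) be a closure space and x ∈ X. Then the connection component K(x) is a closed set, i.e. K(x) ∈ F. -/
/-- `B` is a closed set of the subspace induced on `A` by the closure structure `F`. -/
def SubClosed {X : Type*} (F : Set (Set X)) (A B : Set X) : Prop :=
  ∃ f ∈ F, B = f ∩ A

/-- `A` is a connected subset: the only clopen subsets of the induced subspace are `∅` and `A`. -/
def IsConnSubset {X : Type*} (F : Set (Set X)) (A : Set X) : Prop :=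
  ∀ B ⊆ A, SubClosed F A B → SubClosed F A (A \ B) → B = ∅ ∨ B = A

/-- The connection component of `x`: the union of all connected subsets containing `x`. -/
def connComp {X : Type*} (F : Set (Set X)) (x : X) : Set X :=
  ⋃₀ {A : Set X | x ∈ A ∧ IsConnSubset F A}

section ClosureSpace

variable {X : Type*} {F : Set (Set X)}

def closureOf (F : Set (Set X)) (A : Set X) : Set X :=
  ⋂₀ {f ∈ F | A ⊆ f}

theorem subset_closureOf (A : Set X) : A ⊆ closureOf F A :=
  Set.subset_sInter fun _ hf => hf.2

theorem closureOf_subset {A f : Set X} (hf : f ∈ F) (hAf : A ⊆ f) : closureOf F A ⊆ f :=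
  Set.sInter_subset_of_mem ⟨hf, hAf⟩

theorem closureOf_mem (hF : IsClosureSpace F) (A : Set X) : closureOf F A ∈ F :=
  hF.2.2 _ (fun _ hf => hf.1) ⟨Set.univ, hF.2.1, Set.subset_univ A⟩

theorem SubClosed.restrict {K A B : Set X} (h : SubClosed F K B) (hAK : A ⊆ K) :
    SubClosed F A (B ∩ A) := by
  obtain ⟨f, hf, rfl⟩ := h
  exact ⟨f, hf, by rw [Set.inter_assoc, Set.inter_eq_right.mpr hAK]⟩

theorem SubClosed.eq_closureOf {A C : Set X} (h : SubClosed F (closureOf F A) C) (hAC : A ⊆ C) :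
    C = closureOf F A := by
  obtain ⟨f, hf, rfl⟩ := h
  exact Set.inter_eq_right.mpr (closureOf_subset hf (hAC.trans Set.inter_subset_left))

theorem isConnSubset_singleton (x : X) : IsConnSubset F {x} :=
  fun _ hB _ _ => Set.subset_singleton_iff_eq.mp hB

theorem IsConnSubset.subset_or_subset_diff {A K B : Set X} (hA : IsConnSubset F A)
    (hAK : A ⊆ K) (hB : SubClosed F K B) (hB' : SubClosed F K (K \ B)) :
    A ⊆ B ∨ A ⊆ K \ B := by
  have hdiff : A \ (B ∩ A) = (K \ B) ∩ A := by
    ext y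
    constructor
    · rintro ⟨hyA, hyB⟩
      exact ⟨⟨hAK hyA, fun hy => hyB ⟨hy, hyA⟩⟩, hyA⟩
    · rintro ⟨⟨-, hyB⟩, hyA⟩
      exact ⟨hyA, fun hy => hyB hy.1⟩
  rcases hA (B ∩ A) Set.inter_subset_right (hB.restrict hAK)
      (hdiff ▸ hB'.restrict hAK) with h | h
  · exact Or.inr fun y hy => ⟨hAK hy, fun hyB => (h.subset ⟨hyB, hy⟩ : y ∈ (∅ : Set X))⟩
  · exact Or.inl (h ▸ Set.inter_subset_left)

theorem isConnSubset_sUnion {S : Set (Set X)} {x : X} (hS : ∀ A ∈ S, x ∈ A ∧ IsConnSubset F A) :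
    IsConnSubset F (⋃₀ S) := by
  intro B hBU hB hB'
  have hside : ∀ A ∈ S, A ⊆ B ∨ A ⊆ ⋃₀ S \ B := fun A hA =>
    (hS A hA).2.subset_or_subset_diff (Set.subset_sUnion_of_mem hA) hB hB'
  by_cases hx : x ∈ B
  · refine Or.inr (hBU.antisymm (Set.sUnion_subset fun A hA => ?_))
    exact (hside A hA).resolve_right fun h => (h (hS A hA).1).2 hx
  · refine Or.inl (Set.eq_empty_of_forall_notMem fun y hy => ?_)
    obtain ⟨A, hA, hyA⟩ := hBU hy
    rcases hside A hA with h | h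
    · exact hx (h (hS A hA).1)
    · exact (h hyA).2 hy

theorem isConnSubset_closureOf {A : Set X} (hA : IsConnSubset F A) :
    IsConnSubset F (closureOf F A) := by
  intro B hBcl hB hB'
  rcases hA.subset_or_subset_diff (subset_closureOf A) hB hB' with h | h
  · exact Or.inr (hB.eq_closureOf h)
  · refine Or.inl (Set.eq_empty_of_forall_notMem fun y hy => ?_)
    have hdiff : closureOf F A \ B = closureOf F A := hB'.eq_closureOf h
    exact (hdiff.symm ▸ hBcl hy : y ∈ closureOf F A \ B).2 hy

theorem subset_connComp {A : Set X} {x : X} (hxA : x ∈ A) (hA : IsConnSubset F A) :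
    A ⊆ connComp F x :=
  Set.subset_sUnion_of_mem ⟨hxA, hA⟩

theorem mem_connComp (x : X) : x ∈ connComp F x :=
  subset_connComp (Set.mem_singleton x) (isConnSubset_singleton x) rfl

theorem isConnSubset_connComp (x : X) : IsConnSubset F (connComp F x) :=
  isConnSubset_sUnion fun _ hA => hA

end ClosureSpace

/-- connection components are closed sets. -/
theorem stmt12 {X : Type*} (F : Set (Set X)) (hF : IsClosureSpace F) (x : X) :
    connComp F x ∈ F := by
  have hcl : closureOf F (connComp F x) = connComp F x :=
    (subset_connComp (subset_closureOf _ (mem_connComp x))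
      (isConnSubset_closureOf (isConnSubset_connComp x))).antisymm (subset_closureOf _)
  exact hcl ▸ closureOf_mem hF _
end

section
/- Let (Σ, L, ξ) be a state property system and let C' = {⋀_i a_i | (a_i)_i a family of classical properties of L} be the set of all infima of families of classical properties, and define ξ' : Σ → P(C') by ξ'(p) = ξ(p) ∩ C'. Then C', with the order induced from L, is a complete lattice (with bottom 0 and top I, and with infima computed as in L), and (Σ, C', ξ') is a state property system, called the classical part of (Σ, L, ξ). -/
/-- `a` and `b` are separated by a superselection rule. -/
def Ssr {S L : Type*} [CompleteLattice L] (ξ : S → Set L) (a b : L) : Prop :=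
  ∀ p, a ⊔ b ∈ ξ p → a ∈ ξ p ∨ b ∈ ξ p

/-- `a` is a classical property of the state property system. -/
def IsClassicalProp {S L : Type*} [CompleteLattice L] (ξ : S → Set L) (a : L) : Prop :=
  ∃ ac : L, a ⊔ ac = ⊤ ∧ a ⊓ ac = ⊥ ∧ Ssr ξ a ac

def sInfHull {L : Type*} [CompleteLattice L] (P : L → Prop) : Set L :=
  {a | ∃ A : Set L, (∀ b ∈ A, P b) ∧ a = sInf A}

section sInfHull

variable {L : Type*} [CompleteLattice L] {P : L → Prop}

theorem mem_sInfHull_of_prop {a : L} (ha : P a) : a ∈ sInfHull P :=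
  ⟨{a}, by simpa using ha, sInf_singleton.symm⟩

theorem top_mem_sInfHull : (⊤ : L) ∈ sInfHull P :=
  ⟨∅, by simp, sInf_empty.symm⟩

/-- The witness is every `P`-element above `sInf A`, so no choice of representations is needed. -/
theorem sInf_mem_sInfHull {A : Set L} (hA : A ⊆ sInfHull P) : sInf A ∈ sInfHull P := by
  refine ⟨{b | P b ∧ sInf A ≤ b}, fun b hb => hb.1, le_antisymm (le_sInf fun b hb => hb.2) ?_⟩
  refine le_sInf fun a ha => ?_
  obtain ⟨B, hB, rfl⟩ := hA ha
  exact sInf_le_sInf fun b hb => ⟨hB b hb, (sInf_le ha).trans (sInf_le hb)⟩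

end sInfHull

section StatePropertySystem

variable {S L : Type*} [CompleteLattice L] {ξ : S → Set L}

theorem isClassicalProp_bot : IsClassicalProp ξ ⊥ :=
  ⟨⊤, bot_sup_eq _, bot_inf_eq _, fun _ hp => Or.inr (by rwa [bot_sup_eq] at hp)⟩

namespace IsSPS

variable (hξ : IsSPS ξ) {C : Set L}
include hξ

theorem sInf_mem_inter (hC : ∀ A ⊆ C, sInf A ∈ C) (p : S) {A : Set L} (hAC : A ⊆ C)
    (hA : ∀ a ∈ A, a ∈ ξ p ∩ C) : sInf A ∈ ξ p ∩ C :=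
  ⟨hξ.sInf_mem p A fun a ha => (hA a ha).1, hC A hAC⟩

theorem le_iff_inter {a b : L} (ha : a ∈ C) (hb : b ∈ C) :
    a ≤ b ↔ ∀ r, a ∈ ξ r ∩ C → b ∈ ξ r ∩ C := by
  rw [hξ.le_iff]
  exact ⟨fun h r hr => ⟨h r hr.1, hb⟩, fun h r hr => (h r ⟨hr, ha⟩).1⟩

end IsSPS

end StatePropertySystem

/-- the set `C'` of all infima of families of classical properties, with
the order induced from `L`, is a complete lattice (it is closed under the infima of `L`
and contains `0` and `I`), and `(Σ, C', ξ')` with `ξ'(p) = ξ(p) ∩ C'` is a state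
property system — the classical part of `(Σ, L, ξ)`. -/
theorem stmt15 {S L : Type*} [CompleteLattice L] (ξ : S → Set L) (hξ : IsSPS ξ) :
    let C' : Set L := {a | ∃ A : Set L, (∀ b ∈ A, IsClassicalProp ξ b) ∧ a = sInf A}
    -- `C'` is a complete lattice: infima are computed as in `L`,
    -- the bottom is `0` and the top is `I`
    (∀ A : Set L, A ⊆ C' → sInf A ∈ C') ∧ (⊥ : L) ∈ C' ∧ (⊤ : L) ∈ C' ∧
    -- axiom (i): the bottom `0` of `C'` belongs to no `ξ'(p) = ξ(p) ∩ C'`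
    (∀ p, (⊥ : L) ∉ ξ p ∩ C') ∧
    -- axiom (ii): `ξ'(p)` is closed under infima of `C'`
    (∀ p, ∀ A ⊆ C', (∀ a ∈ A, a ∈ ξ p ∩ C') → sInf A ∈ ξ p ∩ C') ∧
    -- axiom (iii): the order of `C'` is determined by `ξ'`
    (∀ a ∈ C', ∀ b ∈ C', a ≤ b ↔ ∀ r, a ∈ ξ r ∩ C' → b ∈ ξ r ∩ C') := by
  change let C' := sInfHull (IsClassicalProp ξ); _
  intro C'
  have hclosed : ∀ A ⊆ C', sInf A ∈ C' := fun _ => sInf_mem_sInfHull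
  exact ⟨hclosed, mem_sInfHull_of_prop isClassicalProp_bot, top_mem_sInfHull,
    fun p hp => hξ.bot_not_mem p hp.1, fun p _ hAC hA => hξ.sInf_mem_inter hclosed p hAC hA,
    fun _ ha _ hb => hξ.le_iff_inter ha hb⟩
end
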